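/- arXiv:2506.07226 — 6 statements merged into one kernel-verified Lean document; each statement's English description precedes it below -/
import Mathlib

section
/- Let S be a bounded linear operator on a complex Hilbert space H. Then max{ ‖ |S*| + (|S*|^{1/2}·|S|·|S*|^{1/2})^{1/2} ‖ , ‖ |S| + (|S|^{1/2}·|S*|·|S|^{1/2})^{1/2} ‖ } ≤ ‖S‖ + r(|S|·|S*|)^{1/2}, and consequently ω(S) ≤ (1/2)·( ‖S‖ + r(|S|·|S*|)^{1/2} ). -/
/-!
Write `A = |S|` and `B = |S*|`; both have norm `‖S‖`, and `B² = S S*`. Since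
`‖(B^{1/2} A B^{1/2})^{1/2}‖² = ‖B^{1/2} A B^{1/2}‖ = r(B^{1/2} A B^{1/2}) = r(A B)` (using
`r(x y) = r(y x)`), the first inequality is just the triangle inequality.

For the numerical radius, the mixed Schwarz inequality `|⟨S x, x⟩|² ≤ ⟨A x, x⟩ ⟨B x, x⟩` and AM–GM
give `ω(S) ≤ ½ ‖A + B‖`, and Kittaneh's inequality `‖A + B‖ ≤ max ‖A‖ ‖B‖ + ‖A^{1/2} B^{1/2}‖`
concludes, as `‖A^{1/2} B^{1/2}‖² = r(A B)`. The mixed Schwarz inequality comes from factoring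
`S = (S Q) P` with `P = (A + ε)^{1/2}`, `Q = P⁻¹`: then `⟨S x, x⟩ = ⟨P x, (S Q)* x⟩`,
`‖P x‖² = ⟨(A + ε) x, x⟩`, and `(S Q)(S Q)* = S (A + ε)⁻¹ S* ≤ B` because its square is at most
`S S* = B²`; finally let `ε → 0`.
-/

/-- `|S| = (S* S)^{1/2}`, via the continuous functional calculus. -/
noncomputable def absOp {H : Type*} [NormedAddCommGroup H] [InnerProductSpace ℂ H]
    [CompleteSpace H] (S : H →L[ℂ] H) : H →L[ℂ] H :=
  CFC.sqrt (ContinuousLinearMap.adjoint S * S)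

/-- `Re S = (S + S*)/2`. -/
noncomputable def reOp {H : Type*} [NormedAddCommGroup H] [InnerProductSpace ℂ H]
    [CompleteSpace H] (S : H →L[ℂ] H) : H →L[ℂ] H :=
  (2⁻¹ : ℂ) • (S + ContinuousLinearMap.adjoint S)

/-- `Im S = (S - S*)/(2i)`. -/
noncomputable def imOp {H : Type*} [NormedAddCommGroup H] [InnerProductSpace ℂ H]
    [CompleteSpace H] (S : H →L[ℂ] H) : H →L[ℂ] H :=
  (2 * Complex.I)⁻¹ • (S - ContinuousLinearMap.adjoint S)

/-- Numerical radius `ω(S) = sup {|⟨Sx,x⟩| : ‖x‖ = 1}`. -/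
noncomputable def numRadius {H : Type*} [NormedAddCommGroup H] [InnerProductSpace ℂ H]
    [CompleteSpace H] (S : H →L[ℂ] H) : ℝ :=
  ⨆ x : {x : H // ‖x‖ = 1}, ‖(inner ℂ (S x) (x : H) : ℂ)‖

/-- Spectral radius, as a real number. -/
noncomputable def specRad {H : Type*} [NormedAddCommGroup H] [InnerProductSpace ℂ H]
    [CompleteSpace H] (S : H →L[ℂ] H) : ℝ :=
  (spectralRadius ℂ S).toReal


open ContinuousLinearMap RCLike Filter Topology
open scoped ENNReal InnerProductSpace

theorem spectralRadius_mul_comm {𝕜 A : Type*} [NormedField 𝕜] [Ring A] [Algebra 𝕜 A] (a b : A) :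
    spectralRadius 𝕜 (a * b) = spectralRadius 𝕜 (b * a) := by
  suffices key : ∀ a b : A, spectralRadius 𝕜 (a * b) ≤ spectralRadius 𝕜 (b * a) from
    le_antisymm (key a b) (key b a)
  intro a b
  refine iSup₂_le fun k hk => ?_
  rcases eq_or_ne k 0 with rfl | hk0
  · simp
  · have hk' : k ∈ spectrum 𝕜 (b * a) \ {0} := by
      rw [← spectrum.nonzero_mul_comm]
      exact ⟨hk, hk0⟩
    exact le_iSup₂ (f := fun k (_ : k ∈ spectrum 𝕜 (b * a)) => (‖k‖₊ : ℝ≥0∞)) k hk'.1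

namespace CStarAlgebra

variable {A : Type*} [CStarAlgebra A] [PartialOrder A] [StarOrderedRing A]

theorem sqrt_mul_mul_sqrt_nonneg {a : A} (ha : 0 ≤ a) (b : A) :
    0 ≤ CFC.sqrt b * a * CFC.sqrt b :=
  conjugate_nonneg_of_nonneg ha (CFC.sqrt_nonneg b)

theorem norm_sqrt_mul_mul_sqrt {a b : A} (ha : 0 ≤ a) (hb : 0 ≤ b) :
    ‖CFC.sqrt b * a * CFC.sqrt b‖ = (spectralRadius ℂ (a * b)).toReal := by
  rw [← (sqrt_mul_mul_sqrt_nonneg ha b).isSelfAdjoint.toReal_spectralRadius_complex_eq_norm,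
    mul_assoc, spectralRadius_mul_comm, mul_assoc, CFC.sqrt_mul_sqrt_self b hb]

theorem norm_sqrt_mul_sqrt {a b : A} (ha : 0 ≤ a) (hb : 0 ≤ b) :
    ‖CFC.sqrt a * CFC.sqrt b‖ = √(spectralRadius ℂ (a * b)).toReal := by
  have hstar : star (CFC.sqrt a * CFC.sqrt b) * (CFC.sqrt a * CFC.sqrt b) =
      CFC.sqrt b * a * CFC.sqrt b := by
    rw [star_mul, (CFC.sqrt_nonneg a).star_eq, (CFC.sqrt_nonneg b).star_eq, mul_assoc,
      ← mul_assoc (CFC.sqrt a), CFC.sqrt_mul_sqrt_self a ha, ← mul_assoc]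
  rw [← norm_sqrt_mul_mul_sqrt ha hb, ← hstar, CStarRing.norm_star_mul_self,
    Real.sqrt_mul_self (norm_nonneg _)]

theorem norm_add_sqrt_sqrt_mul_mul_sqrt_le {a b : A} (ha : 0 ≤ a) (hb : 0 ≤ b) :
    ‖a + CFC.sqrt (CFC.sqrt a * b * CFC.sqrt a)‖ ≤
      ‖a‖ + √(spectralRadius ℂ (b * a)).toReal := by
  refine (norm_add_le _ _).trans_eq ?_
  rw [CFC.norm_sqrt _ (sqrt_mul_mul_sqrt_nonneg hb a), norm_sqrt_mul_mul_sqrt hb ha]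

theorem mul_mul_star_le_abs_star {s k : A} (hk : 0 ≤ k) (h : k * (star s * s) * k ≤ 1) :
    s * k * star s ≤ CFC.abs (star s) := by
  have hsq : (s * k * star s) * (s * k * star s) ≤ s * star s :=
    calc (s * k * star s) * (s * k * star s) = s * (k * (star s * s) * k) * star s := by
          simp only [mul_assoc]
      _ ≤ s * 1 * star s := star_right_conjugate_le_conjugate h s
      _ = s * star s := by rw [mul_one]
  calc s * k * star s = CFC.sqrt ((s * k * star s) * (s * k * star s)) :=
        (CFC.sqrt_mul_self _ (star_right_conjugate_nonneg hk s)).symm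
    _ ≤ CFC.sqrt (s * star s) := CFC.sqrt_le_sqrt _ _ hsq
    _ = CFC.abs (star s) := by rw [CFC.abs, star_star]

theorem exists_sqrt_add_algebraMap_and_inverse {a : A} (ha : 0 ≤ a) {ε : ℝ} (hε : 0 < ε) :
    ∃ P Q : A, IsSelfAdjoint P ∧ IsSelfAdjoint Q ∧ P * P = a + algebraMap ℝ A ε ∧
      Q * P = 1 ∧ Q * Q * (a * a) * (Q * Q) ≤ 1 := by
  -- `|t|` keeps `f` and `1 / f` continuous on all of `ℝ`; on the spectrum of `a` it is just `t`.
  set f : ℝ → ℝ := fun t => √(|t| + ε)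
  set g : ℝ → ℝ := fun t => (f t)⁻¹
  have hf_pos : ∀ t, 0 < f t := fun t => Real.sqrt_pos.2 (by positivity)
  have hf : Continuous f := by fun_prop
  have hg : Continuous g := hf.inv₀ fun t => (hf_pos t).ne'
  have hgg : Continuous fun t => g t * g t := hg.mul hg
  have hid : Continuous fun t : ℝ => t * t := continuous_id.mul continuous_id
  have hf_sq : ∀ t ∈ spectrum ℝ a, f t * f t = t + ε := fun t ht => by
    rw [Real.mul_self_sqrt (by positivity), abs_of_nonneg (spectrum_nonneg_of_nonneg ha ht)]
  refine ⟨cfc f a, cfc g a, cfc_predicate _ a, cfc_predicate _ a, ?_, ?_, ?_⟩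
  · calc cfc f a * cfc f a = cfc (fun t => f t * f t) a := (cfc_mul f f a).symm
      _ = cfc (fun t => t + ε) a := cfc_congr hf_sq
      _ = a + algebraMap ℝ A ε := by rw [cfc_add_const ε (fun t => t) a, cfc_id' ℝ a]
  · rw [← cfc_mul g f a, ← cfc_const_one ℝ a]
    exact cfc_congr fun t _ => inv_mul_cancel₀ (hf_pos t).ne'
  · have hprod : cfc g a * cfc g a * (a * a) * (cfc g a * cfc g a) =
        cfc (fun t => g t * g t * (t * t) * (g t * g t)) a := by
      rw [cfc_mul (fun t => g t * g t * (t * t)) _ a (hgg.mul hid).continuousOn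
          hgg.continuousOn, cfc_mul (fun t => g t * g t) _ a hgg.continuousOn hid.continuousOn,
        cfc_mul g g a, cfc_mul (fun t => t) (fun t => t) a, cfc_id' ℝ a]
    rw [hprod]
    refine cfc_le_one _ a fun t ht => ?_
    have ht0 := spectrum_nonneg_of_nonneg ha ht
    rw [← mul_inv, hf_sq t ht, ← div_eq_inv_mul, div_mul_eq_mul_div, ← div_eq_mul_inv, div_div,
      div_le_one (by positivity)]
    nlinarith

end CStarAlgebra

section InnerProductSpace

variable {𝕜 E F : Type*} [RCLike 𝕜] [NormedAddCommGroup E] [InnerProductSpace 𝕜 E]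

theorem re_inner_apply_self_le_of_le {T U : E →L[𝕜] E} (h : T ≤ U) (x : E) :
    re ⟪T x, x⟫_𝕜 ≤ re ⟪U x, x⟫_𝕜 := by
  have := ((le_def T U).1 h).re_inner_nonneg_left x
  rwa [sub_apply, inner_sub_left, map_sub, sub_nonneg] at this

theorem opNorm_le_of_sq_norm_apply_le {T : E →L[𝕜] E} {K : ℝ} (hK : 0 ≤ K)
    (h : ∀ x, ‖T x‖ ^ 2 ≤ K * re ⟪T x, x⟫_𝕜) : ‖T‖ ≤ K := by
  refine opNorm_le_bound _ hK fun x => ?_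
  have hTx : ‖T x‖ ^ 2 ≤ K * (‖T x‖ * ‖x‖) :=
    (h x).trans (mul_le_mul_of_nonneg_left (re_inner_le_norm _ _) hK)
  by_contra! hlt
  have hpos : 0 < ‖T x‖ := (by positivity : 0 ≤ K * ‖x‖).trans_lt hlt
  nlinarith [mul_lt_mul_of_pos_left hlt hpos]

variable [CompleteSpace E] [NormedAddCommGroup F] [InnerProductSpace 𝕜 F] [CompleteSpace F]

/-- Kittaneh's inequality. -/
theorem norm_mul_adjoint_add_mul_adjoint_le (P Q : E →L[𝕜] F) :
    ‖P ∘L adjoint P + Q ∘L adjoint Q‖ ≤ max (‖P‖ ^ 2) (‖Q‖ ^ 2) + ‖adjoint P ∘L Q‖ := by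
  set m := max (‖P‖ ^ 2) (‖Q‖ ^ 2)
  set c := ‖adjoint P ∘L Q‖
  refine opNorm_le_of_sq_norm_apply_le (by positivity) fun x => ?_
  set y := adjoint P x
  set z := adjoint Q x
  have happly : (P ∘L adjoint P + Q ∘L adjoint Q) x = P y + Q z := rfl
  have hre : re ⟪P y + Q z, x⟫_𝕜 = ‖y‖ ^ 2 + ‖z‖ ^ 2 := by
    rw [inner_add_left, map_add, ← adjoint_inner_right P, ← adjoint_inner_right Q,
      ← inner_self_eq_norm_sq (𝕜 := 𝕜), ← inner_self_eq_norm_sq (𝕜 := 𝕜)]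
  have hPy : ‖P y‖ ^ 2 ≤ m * ‖y‖ ^ 2 :=
    calc ‖P y‖ ^ 2 ≤ (‖P‖ * ‖y‖) ^ 2 := by gcongr; exact le_opNorm _ _
      _ ≤ m * ‖y‖ ^ 2 := by rw [mul_pow]; gcongr; exact le_max_left _ _
  have hQz : ‖Q z‖ ^ 2 ≤ m * ‖z‖ ^ 2 :=
    calc ‖Q z‖ ^ 2 ≤ (‖Q‖ * ‖z‖) ^ 2 := by gcongr; exact le_opNorm _ _
      _ ≤ m * ‖z‖ ^ 2 := by rw [mul_pow]; gcongr; exact le_max_right _ _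
  have hcross : re ⟪P y, Q z⟫_𝕜 ≤ c * (‖y‖ * ‖z‖) :=
    calc re ⟪P y, Q z⟫_𝕜 = re ⟪y, (adjoint P ∘L Q) z⟫_𝕜 := by
          rw [comp_apply, adjoint_inner_right]
      _ ≤ ‖y‖ * ‖(adjoint P ∘L Q) z‖ := re_inner_le_norm _ _
      _ ≤ ‖y‖ * (c * ‖z‖) := by gcongr; exact le_opNorm _ _
      _ = c * (‖y‖ * ‖z‖) := by ring
  rw [happly, hre, norm_add_sq (𝕜 := 𝕜)]
  nlinarith [sq_nonneg (‖y‖ - ‖z‖), norm_nonneg (adjoint P ∘L Q)]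

theorem norm_inner_apply_self_sq_le_of_mul_eq_one (S P Q : E →L[𝕜] E) (hQP : Q * P = 1)
    (x : E) : ‖⟪S x, x⟫_𝕜‖ ^ 2 ≤ ‖P x‖ ^ 2 * ‖adjoint (S * Q) x‖ ^ 2 := by
  have hfactor : ⟪S x, x⟫_𝕜 = ⟪P x, adjoint (S * Q) x⟫_𝕜 := by
    have hx : Q (P x) = x := DFunLike.congr_fun hQP x
    rw [adjoint_inner_right]
    exact congrArg (⟪S ·, x⟫_𝕜) hx.symm
  rw [hfactor, ← mul_pow]
  gcongr
  exact norm_inner_le_norm _ _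

end InnerProductSpace

section HilbertSpace

variable {H : Type*} [NormedAddCommGroup H] [InnerProductSpace ℂ H] [CompleteSpace H]

theorem norm_add_le_max_add_sqrt_spectralRadius {a b : H →L[ℂ] H} (ha : 0 ≤ a) (hb : 0 ≤ b) :
    ‖a + b‖ ≤ max ‖a‖ ‖b‖ + √(spectralRadius ℂ (a * b)).toReal := by
  have h := norm_mul_adjoint_add_mul_adjoint_le (CFC.sqrt a) (CFC.sqrt b)
  rwa [(CFC.sqrt_nonneg a).isSelfAdjoint.adjoint_eq, (CFC.sqrt_nonneg b).isSelfAdjoint.adjoint_eq,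
    ← mul_def, ← mul_def, ← mul_def, CFC.sqrt_mul_sqrt_self a ha, CFC.sqrt_mul_sqrt_self b hb,
    CFC.norm_sqrt a ha, CFC.norm_sqrt b hb, Real.sq_sqrt (norm_nonneg _),
    Real.sq_sqrt (norm_nonneg _), CStarAlgebra.norm_sqrt_mul_sqrt ha hb] at h

theorem norm_inner_apply_self_sq_le_of_pos (S : H →L[ℂ] H) (x : H) {ε : ℝ} (hε : 0 < ε) :
    ‖⟪S x, x⟫_ℂ‖ ^ 2 ≤
      (re ⟪CFC.abs S x, x⟫_ℂ + ε * ‖x‖ ^ 2) * re ⟪CFC.abs (star S) x, x⟫_ℂ := by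
  obtain ⟨P, Q, hP, hQ, hPP, hQP, hQaQ⟩ :=
    CStarAlgebra.exists_sqrt_add_algebraMap_and_inverse (CFC.abs_nonneg S) hε
  have hPx : ‖P x‖ ^ 2 = re ⟪CFC.abs S x, x⟫_ℂ + ε * ‖x‖ ^ 2 := by
    rw [apply_norm_sq_eq_inner_adjoint_left, hP.adjoint_eq]
    change re ⟪(P * P) x, x⟫_ℂ = _
    rw [hPP, add_apply, inner_add_left, map_add, ContinuousLinearMap.algebraMap_apply,
      inner_smul_left_eq_smul, smul_re, ← inner_self_eq_norm_sq (𝕜 := ℂ)]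
  have hSQ : ‖adjoint (S * Q) x‖ ^ 2 ≤ re ⟪CFC.abs (star S) x, x⟫_ℂ := by
    have hle : S * (Q * Q) * star S ≤ CFC.abs (star S) :=
      CStarAlgebra.mul_mul_star_le_abs_star hQ.mul_self_nonneg (by rwa [← CFC.abs_mul_abs])
    rw [apply_norm_sq_eq_inner_adjoint_left, adjoint_adjoint]
    refine (le_of_eq ?_).trans (re_inner_apply_self_le_of_le hle x)
    rw [← star_eq_adjoint, star_mul, hQ.star_eq]
    simp only [mul_assoc]
    rfl
  calc ‖⟪S x, x⟫_ℂ‖ ^ 2 ≤ ‖P x‖ ^ 2 * ‖adjoint (S * Q) x‖ ^ 2 :=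
        norm_inner_apply_self_sq_le_of_mul_eq_one S P Q hQP x
    _ ≤ _ := by rw [← hPx]; gcongr

theorem norm_inner_apply_self_sq_le (S : H →L[ℂ] H) (x : H) :
    ‖⟪S x, x⟫_ℂ‖ ^ 2 ≤ re ⟪CFC.abs S x, x⟫_ℂ * re ⟪CFC.abs (star S) x, x⟫_ℂ := by
  set u := re ⟪CFC.abs S x, x⟫_ℂ
  set w := re ⟪CFC.abs (star S) x, x⟫_ℂ
  have hlim : Tendsto (fun ε => (u + ε * ‖x‖ ^ 2) * w) (𝓝[>] 0) (𝓝 ((u + 0 * ‖x‖ ^ 2) * w)) :=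
    (Continuous.tendsto (by fun_prop) 0).mono_left nhdsWithin_le_nhds
  rw [zero_mul, add_zero] at hlim
  exact ge_of_tendsto hlim
    (eventually_nhdsWithin_of_forall fun ε hε => norm_inner_apply_self_sq_le_of_pos S x hε)

theorem numRadius_le_half_norm_abs_add_abs_star (S : H →L[ℂ] H) :
    numRadius S ≤ 1 / 2 * ‖CFC.abs S + CFC.abs (star S)‖ := by
  unfold numRadius
  refine Real.iSup_le (fun ⟨x, hx⟩ => ?_) (by positivity)
  dsimp only
  set u := re ⟪CFC.abs S x, x⟫_ℂ
  set w := re ⟪CFC.abs (star S) x, x⟫_ℂ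
  have hu : 0 ≤ u :=
    ((nonneg_iff_isPositive (CFC.abs S)).1 (CFC.abs_nonneg S)).re_inner_nonneg_left x
  have hw : 0 ≤ w :=
    ((nonneg_iff_isPositive (CFC.abs (star S))).1 (CFC.abs_nonneg _)).re_inner_nonneg_left x
  have hsum : u + w ≤ ‖CFC.abs S + CFC.abs (star S)‖ :=
    calc u + w = re ⟪(CFC.abs S + CFC.abs (star S)) x, x⟫_ℂ := by
          rw [add_apply, inner_add_left, map_add]
      _ ≤ ‖(CFC.abs S + CFC.abs (star S)) x‖ * ‖x‖ := re_inner_le_norm _ _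
      _ ≤ ‖CFC.abs S + CFC.abs (star S)‖ := by
          simpa only [hx, mul_one] using le_opNorm (CFC.abs S + CFC.abs (star S)) x
  have hamgm : ‖⟪S x, x⟫_ℂ‖ ^ 2 ≤ ((u + w) / 2) ^ 2 :=
    (norm_inner_apply_self_sq_le S x).trans (by nlinarith [sq_nonneg (u - w)])
  have := (pow_le_pow_iff_left₀ (norm_nonneg _) (by positivity) two_ne_zero).1 hamgm
  linarith

end HilbertSpace

set_option synthInstance.maxHeartbeats 1000000 in
theorem stmt_7 {H : Type*} [NormedAddCommGroup H] [InnerProductSpace ℂ H] [CompleteSpace H]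
    (S : H →L[ℂ] H) :
    (max ‖absOp (ContinuousLinearMap.adjoint S) +
            CFC.sqrt (CFC.sqrt (absOp (ContinuousLinearMap.adjoint S)) * absOp S *
              CFC.sqrt (absOp (ContinuousLinearMap.adjoint S)))‖
        ‖absOp S + CFC.sqrt (CFC.sqrt (absOp S) * absOp (ContinuousLinearMap.adjoint S) *
            CFC.sqrt (absOp S))‖ ≤
      ‖S‖ + Real.sqrt (specRad (absOp S * absOp (ContinuousLinearMap.adjoint S)))) ∧
    numRadius S ≤
      (1 / 2 : ℝ) *
        (‖S‖ + Real.sqrt (specRad (absOp S * absOp (ContinuousLinearMap.adjoint S)))) := by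
  have hA : absOp S = CFC.abs S := rfl
  have hB : absOp (ContinuousLinearMap.adjoint S) = CFC.abs (star S) := rfl
  have hnorm_B : ‖CFC.abs (star S)‖ = ‖S‖ := by rw [CFC.norm_abs, norm_star]
  rw [hB, hA, specRad]
  refine ⟨max_le ?_ ?_, ?_⟩
  · simpa only [hnorm_B] using CStarAlgebra.norm_add_sqrt_sqrt_mul_mul_sqrt_le
      (CFC.abs_nonneg (star S)) (CFC.abs_nonneg S)
  · simpa only [CFC.norm_abs, spectralRadius_mul_comm (CFC.abs (star S))] using
      CStarAlgebra.norm_add_sqrt_sqrt_mul_mul_sqrt_le (CFC.abs_nonneg S) (CFC.abs_nonneg (star S))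
  · calc numRadius S ≤ 1 / 2 * ‖CFC.abs S + CFC.abs (star S)‖ :=
          numRadius_le_half_norm_abs_add_abs_star S
      _ ≤ 1 / 2 * (‖S‖ + √(spectralRadius ℂ (CFC.abs S * CFC.abs (star S))).toReal) := by
          gcongr
          simpa only [CFC.norm_abs, hnorm_B, max_self] using
            norm_add_le_max_add_sqrt_spectralRadius (CFC.abs_nonneg S) (CFC.abs_nonneg (star S))
end

section
/- Let A, B be normal bounded linear operators on a complex Hilbert space H (i.e., A*A = AA* and B*B = BB*). Then ‖A + B‖ ≤ max{ ‖ |A| + | |B|^{1/2}·|A|^{1/2} | ‖ , ‖ |B| + | |A|^{1/2}·|B|^{1/2} | ‖ }. -/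
open Polynomial Filter Topology ContinuousLinearMap RCLike
open scoped InnerProductSpace

theorem SemiconjBy.aeval {R A : Type*} [CommSemiring R] [Semiring A] [Algebra R A] {x a b : A}
    (h : SemiconjBy x a b) (q : R[X]) : SemiconjBy x (aeval a q) (aeval b q) := by
  induction q using Polynomial.induction_on' with
  | add p q hp hq => simpa only [map_add] using hp.add_right hq
  | monomial n c =>
    simp only [aeval_monomial]
    exact SemiconjBy.mul_right (Algebra.commute_algebraMap_right c x) (h.pow_right n)

theorem exists_seq_polynomial_tendstoUniformlyOn {f : ℝ → ℝ} (hf : Continuous f) {s : Set ℝ}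
    (hs : IsCompact s) :
    ∃ q : ℕ → ℝ[X], TendstoUniformlyOn (fun n t => (q n).eval t) f atTop s := by
  obtain ⟨C, hC⟩ := hs.exists_bound_of_continuousOn continuousOn_id
  choose q hq using fun n : ℕ => exists_polynomial_near_of_continuousOn (-C) C f
    hf.continuousOn (1 / (n + 1)) Nat.one_div_pos_of_nat
  refine ⟨q, Metric.tendstoUniformlyOn_iff.mpr fun ε hε => ?_⟩
  obtain ⟨N, hN⟩ := exists_nat_one_div_lt hε
  filter_upwards [eventually_ge_atTop N] with n hn t ht
  rw [Real.dist_eq, abs_sub_comm]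
  refine (hq n t (abs_le.mp (hC t ht))).trans (lt_of_le_of_lt ?_ hN)
  gcongr

theorem SemiconjBy.cfc_real {A : Type*} [CStarAlgebra A] {x a b : A} (h : SemiconjBy x a b)
    (ha : IsSelfAdjoint a) (hb : IsSelfAdjoint b) {f : ℝ → ℝ} (hf : Continuous f) :
    SemiconjBy x (cfc f a) (cfc f b) := by
  obtain ⟨q, hq⟩ := exists_seq_polynomial_tendstoUniformlyOn hf
    ((spectrum.isCompact (𝕜 := ℝ) a).union (spectrum.isCompact b))
  have lim : ∀ c : A, spectrum ℝ c ⊆ spectrum ℝ a ∪ spectrum ℝ b → IsSelfAdjoint c →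
      Tendsto (fun n => Polynomial.aeval c (q n)) atTop (𝓝 (cfc f c)) := fun c hc hsa => by
    simp_rw [← cfc_polynomial _ c hsa]
    exact tendsto_cfc_fun (hq.mono hc) (.of_forall fun n => (q n).continuousOn)
  exact tendsto_nhds_unique
    (((lim a Set.subset_union_left ha).const_mul x).congr fun n => (h.aeval (q n)).eq)
    ((lim b Set.subset_union_right hb).mul_const x)

theorem mul_cfc_star_mul_self {A : Type*} [CStarAlgebra A] (a : A) {f : ℝ → ℝ}
    (hf : Continuous f) : a * cfc f (star a * a) = cfc f (a * star a) * a :=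
  SemiconjBy.cfc_real (mul_assoc _ _ _).symm (.star_mul_self a) (.mul_star_self a) hf

theorem CFC.abs_eq_cfc_sqrt {A : Type*} [CStarAlgebra A] [PartialOrder A] [StarOrderedRing A]
    (a : A) : CFC.abs a = cfc Real.sqrt (star a * a) := by
  show CFC.sqrt (star a * a) = _
  rw [CFC.sqrt_eq_real_sqrt _ (star_mul_self_nonneg a), cfcₙ_eq_cfc]

theorem inv_sqrt_add_mul_le_sqrt {t ε : ℝ} (ht : 0 ≤ t) (hε : 0 < ε) :
    (√t + ε)⁻¹ * t ≤ √t := by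
  rw [inv_mul_le_iff₀ (by positivity)]
  nlinarith [Real.mul_self_sqrt ht, Real.sqrt_nonneg t]

section

variable {H : Type*} [NormedAddCommGroup H] [InnerProductSpace ℂ H]

theorem ContinuousLinearMap.re_inner_le_of_le {S T : H →L[ℂ] H} (h : S ≤ T) (x : H) :
    re ⟪S x, x⟫_ℂ ≤ re ⟪T x, x⟫_ℂ := by
  have := ((le_def S T).mp h).re_inner_nonneg_left x
  rwa [sub_apply, inner_sub_left, map_sub, sub_nonneg] at this

theorem ContinuousLinearMap.re_inner_self_le (T : H →L[ℂ] H) (x : H) :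
    re ⟪T x, x⟫_ℂ ≤ ‖T‖ * ‖x‖ ^ 2 :=
  calc re ⟪T x, x⟫_ℂ ≤ ‖T x‖ * ‖x‖ := re_inner_le_norm _ _
    _ ≤ ‖T‖ * ‖x‖ * ‖x‖ := by gcongr; exact le_opNorm T x
    _ = ‖T‖ * ‖x‖ ^ 2 := by ring

theorem opNorm_le_of_norm_apply_sq_le {S : H →L[ℂ] H} {m : ℝ} (hm : 0 ≤ m)
    (h : ∀ x, ‖S x‖ ^ 2 ≤ m * re ⟪S x, x⟫_ℂ) : ‖S‖ ≤ m := by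
  refine opNorm_le_bound S hm fun x => ?_
  rcases (norm_nonneg (S x)).eq_or_lt with h0 | h0
  · rw [← h0]; positivity
  · have := (h x).trans (mul_le_mul_of_nonneg_left (re_inner_le_norm (S x) x) hm)
    nlinarith

variable [CompleteSpace H]

theorem two_mul_re_inner_le_of_mul_eq_one {T L M : H →L[ℂ] H} (hML : M * L = 1) (x y : H) :
    2 * re ⟪T x, y⟫_ℂ ≤ ‖L x‖ ^ 2 + ‖adjoint (T * M) y‖ ^ 2 := by
  have hT : ⟪T x, y⟫_ℂ = ⟪L x, adjoint (T * M) y⟫_ℂ := by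
    rw [adjoint_inner_right, ← mul_apply_eq_comp, mul_assoc, hML, mul_one]
  rw [hT]
  nlinarith [norm_sub_sq (𝕜 := ℂ) (L x) (adjoint (T * M) y), sq_nonneg ‖L x - adjoint (T * M) y‖]

theorem two_mul_re_inner_le_abs_add_mul_norm_sq (T : H →L[ℂ] H) (x y : H) {ε : ℝ} (hε : 0 < ε) :
    2 * re ⟪T x, y⟫_ℂ ≤
      re ⟪CFC.abs T x, x⟫_ℂ + ε * ‖x‖ ^ 2 + re ⟪CFC.abs (star T) y, y⟫_ℂ := by
  set h : ℝ → ℝ := fun t => (√t + ε)⁻¹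
  have hh : Continuous h := by fun_prop (disch := intros; positivity)
  set g : ℝ → ℝ := fun t => √(√t + ε)
  have hg : Continuous g := by fun_prop
  have hg0 : ∀ t, g t ≠ 0 := fun t => by positivity
  have hgg : ∀ t, g t * g t = √t + ε := fun t => Real.mul_self_sqrt (by positivity)
  set L := cfc g (star T * T)
  set M := cfc (fun t => (g t)⁻¹) (star T * T)
  have hM : IsSelfAdjoint M := cfc_predicate _ _
  have hML : M * L = 1 := by
    rw [← cfc_mul (fun t => (g t)⁻¹) g _ (hg.inv₀ hg0).continuousOn hg.continuousOn,
      ← cfc_one ℝ (star T * T)]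
    exact cfc_congr fun t _ => inv_mul_cancel₀ (hg0 t)
  have hL : ‖L x‖ ^ 2 = re ⟪CFC.abs T x, x⟫_ℂ + ε * ‖x‖ ^ 2 := by
    have hLL : adjoint L * L = CFC.abs T + algebraMap ℝ _ ε := by
      rw [(cfc_predicate g (star T * T)).adjoint_eq,
        ← cfc_mul _ _ _ hg.continuousOn hg.continuousOn, CFC.abs_eq_cfc_sqrt, ← cfc_add_const _ _ _ Real.continuous_sqrt.continuousOn]
      exact cfc_congr fun t _ => hgg t
    rw [apply_norm_sq_eq_inner_adjoint_left, ← mul_def, hLL, add_apply, inner_add_left, map_add,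
      ContinuousLinearMap.algebraMap_apply, real_smul_eq_coe_smul (K := ℂ), inner_smul_left,
      inner_self_eq_norm_sq_to_K, conj_ofReal]
    norm_cast
  have hTM : ‖adjoint (T * M) y‖ ^ 2 ≤ re ⟪CFC.abs (star T) y, y⟫_ℂ := by
    have hMM : M * M = cfc h (star T * T) := by
      rw [← cfc_mul (fun t => (g t)⁻¹) (fun t => (g t)⁻¹) _ (hg.inv₀ hg0).continuousOn
        (hg.inv₀ hg0).continuousOn]
      exact cfc_congr fun t _ => by rw [← mul_inv, hgg]
    have hTMMT : T * M * adjoint (T * M) = cfc (fun t => h t * t) (T * star T) :=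
      calc T * M * adjoint (T * M) = T * (M * M) * star T := by
            rw [← star_eq_adjoint, star_mul, hM.star_eq]; noncomm_ring
        _ = cfc h (T * star T) * (T * star T) := by
            rw [hMM, mul_cfc_star_mul_self T hh, mul_assoc]
        _ = cfc (fun t => h t * t) (T * star T) := by
            rw [cfc_mul h (fun t => t) _ hh.continuousOn continuousOn_id, cfc_id' ℝ _]
    have hle : cfc (fun t => h t * t) (T * star T) ≤ CFC.abs (star T) := by
      rw [CFC.abs_eq_cfc_sqrt, star_star]
      exact cfc_mono (fun t ht => inv_sqrt_add_mul_le_sqrt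
        (spectrum_nonneg_of_nonneg (mul_star_self_nonneg T) ht) hε)
        (hh.mul continuous_id).continuousOn Real.continuous_sqrt.continuousOn
    rw [apply_norm_sq_eq_inner_adjoint_left, adjoint_adjoint, ← mul_def, hTMMT]
    exact re_inner_le_of_le hle y
  linarith [two_mul_re_inner_le_of_mul_eq_one (T := T) hML x y]

theorem two_mul_re_inner_le_abs (T : H →L[ℂ] H) (x y : H) :
    2 * re ⟪T x, y⟫_ℂ ≤ re ⟪CFC.abs T x, x⟫_ℂ + re ⟪CFC.abs (star T) y, y⟫_ℂ := by
  refine le_of_forall_pos_le_add fun δ hδ => ?_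
  have hx : 0 < ‖x‖ ^ 2 + 1 := by positivity
  have hε := two_mul_re_inner_le_abs_add_mul_norm_sq T x y (div_pos hδ hx)
  have : δ / (‖x‖ ^ 2 + 1) * ‖x‖ ^ 2 ≤ δ := by
    rw [div_mul_eq_mul_div, div_le_iff₀ hx]; nlinarith
  linarith

theorem norm_add_le_half_norm_abs_add (A B : H →L[ℂ] H) :
    ‖A + B‖ ≤
      (‖CFC.abs A + CFC.abs B‖ + ‖CFC.abs (star A) + CFC.abs (star B)‖) / 2 := by
  refine opNorm_le_of_re_inner_le (by positivity) fun x y hx hy => ?_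
  have hA := two_mul_re_inner_le_abs A x y
  have hB := two_mul_re_inner_le_abs B x y
  have hx' := re_inner_self_le (CFC.abs A + CFC.abs B) x
  have hy' := re_inner_self_le (CFC.abs (star A) + CFC.abs (star B)) y
  simp only [add_apply, inner_add_left, map_add, hx, hy, one_pow, mul_one] at hA hB hx' hy' ⊢
  linarith

theorem norm_add_le_norm_abs_add_abs {A B : H →L[ℂ] H} (hA : IsStarNormal A)
    (hB : IsStarNormal B) : ‖A + B‖ ≤ ‖CFC.abs A + CFC.abs B‖ := by
  simpa [CFC.abs_star] using norm_add_le_half_norm_abs_add A B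

theorem norm_sqrt_apply_sq {P : H →L[ℂ] H} (hP : 0 ≤ P) (x : H) :
    ‖CFC.sqrt P x‖ ^ 2 = re ⟪P x, x⟫_ℂ := by
  rw [apply_norm_sq_eq_inner_adjoint_left, ← mul_def,
    (IsSelfAdjoint.of_nonneg (CFC.sqrt_nonneg P)).adjoint_eq, CFC.sqrt_mul_sqrt_self P hP]

theorem norm_add_apply_sq_le {P Q : H →L[ℂ] H} (hP : 0 ≤ P) (hQ : 0 ≤ Q) (x : H) :
    ‖(P + Q) x‖ ^ 2 ≤
      max ‖P + CFC.abs (CFC.sqrt Q * CFC.sqrt P)‖ ‖Q + CFC.abs (CFC.sqrt P * CFC.sqrt Q)‖ *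
        re ⟪(P + Q) x, x⟫_ℂ := by
  set p := CFC.sqrt P
  set q := CFC.sqrt Q
  have hp : IsSelfAdjoint p := .of_nonneg (CFC.sqrt_nonneg P)
  have hq : IsSelfAdjoint q := .of_nonneg (CFC.sqrt_nonneg Q)
  set u := p x
  set v := q x
  have hPu : ‖P x‖ ^ 2 = re ⟪P u, u⟫_ℂ := by
    rw [← norm_sqrt_apply_sq hP, ← mul_apply_eq_comp, CFC.sqrt_mul_sqrt_self P hP]
  have hQv : ‖Q x‖ ^ 2 = re ⟪Q v, v⟫_ℂ := by
    rw [← norm_sqrt_apply_sq hQ, ← mul_apply_eq_comp, CFC.sqrt_mul_sqrt_self Q hQ]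
  have hPQ : ⟪P x, Q x⟫_ℂ = ⟪(q * p) u, v⟫_ℂ := by
    rw [← CFC.sqrt_mul_sqrt_self P hP, ← CFC.sqrt_mul_sqrt_self Q hQ, mul_apply_eq_comp,
      mul_apply_eq_comp, mul_apply_eq_comp, ← adjoint_inner_left, hq.adjoint_eq]
  have hcross := two_mul_re_inner_le_abs (q * p) u v
  rw [star_mul, hp.star_eq, hq.star_eq] at hcross
  have h1 := re_inner_self_le (P + CFC.abs (q * p)) u
  have h2 := re_inner_self_le (Q + CFC.abs (p * q)) v
  have hm1 := le_max_left ‖P + CFC.abs (q * p)‖ ‖Q + CFC.abs (p * q)‖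
  have hm2 := le_max_right ‖P + CFC.abs (q * p)‖ ‖Q + CFC.abs (p * q)‖
  have hu := norm_sqrt_apply_sq hP x
  have hv := norm_sqrt_apply_sq hQ x
  rw [add_apply, norm_add_sq (𝕜 := ℂ), hPu, hQv, hPQ, inner_add_left, map_add, ← hu, ← hv]
  simp only [add_apply, inner_add_left, map_add] at h1 h2
  nlinarith [mul_le_mul_of_nonneg_right hm1 (sq_nonneg ‖u‖),
    mul_le_mul_of_nonneg_right hm2 (sq_nonneg ‖v‖)]

theorem norm_add_le_max_of_nonneg {P Q : H →L[ℂ] H} (hP : 0 ≤ P) (hQ : 0 ≤ Q) :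
    ‖P + Q‖ ≤
      max ‖P + CFC.abs (CFC.sqrt Q * CFC.sqrt P)‖ ‖Q + CFC.abs (CFC.sqrt P * CFC.sqrt Q)‖ :=
  opNorm_le_of_norm_apply_sq_le ((norm_nonneg _).trans (le_max_left _ _))
    (norm_add_apply_sq_le hP hQ)

end

set_option synthInstance.maxHeartbeats 1000000 in
theorem stmt_11 {H : Type*} [NormedAddCommGroup H] [InnerProductSpace ℂ H] [CompleteSpace H]
    (A B : H →L[ℂ] H)
    (hA : ContinuousLinearMap.adjoint A * A = A * ContinuousLinearMap.adjoint A)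
    (hB : ContinuousLinearMap.adjoint B * B = B * ContinuousLinearMap.adjoint B) :
    ‖A + B‖ ≤
      max ‖absOp A + absOp (CFC.sqrt (absOp B) * CFC.sqrt (absOp A))‖
        ‖absOp B + absOp (CFC.sqrt (absOp A) * CFC.sqrt (absOp B))‖ := by
  calc ‖A + B‖ ≤ ‖absOp A + absOp B‖ := norm_add_le_norm_abs_add_abs ⟨hA⟩ ⟨hB⟩
    _ ≤ _ := norm_add_le_max_of_nonneg (CFC.abs_nonneg A) (CFC.abs_nonneg B)
end

section
/- Let A be a normal bounded linear operator on a complex Hilbert space H (i.e., A*A = AA*). Then ‖A‖ ≤ (1/2)·max{ ‖ |A| + | |A*|^{1/2}·|A|^{1/2} | ‖ , ‖ |A*| + | |A|^{1/2}·|A*|^{1/2} | ‖ }. -/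
/-!
For normal `A` we have `|A*| = |A|`, so `|A*|^{1/2} |A|^{1/2} = |A|` and both terms of the
maximum equal `‖|A| + |A|‖ = 2‖A‖`: the bound holds with equality.
-/

namespace CFC

variable {A : Type*} [CStarAlgebra A] [PartialOrder A] [StarOrderedRing A]

lemma norm_abs_add_abs_sqrt_abs_star_mul_sqrt_abs (a : A) [IsStarNormal a] :
    ‖abs a + abs (sqrt (abs (star a)) * sqrt (abs a))‖ = 2 * ‖a‖ := by
  rw [abs_star a, sqrt_mul_sqrt_self (abs a), cfcAbs_cfcAbs, ← two_smul ℝ (abs a), norm_smul,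
    norm_abs, Real.norm_ofNat]

end CFC

lemma absOp_eq_cfcAbs {H : Type*} [NormedAddCommGroup H] [InnerProductSpace ℂ H]
    [CompleteSpace H] (S : H →L[ℂ] H) : absOp S = CFC.abs S :=
  rfl

theorem stmt_12 {H : Type*} [NormedAddCommGroup H] [InnerProductSpace ℂ H] [CompleteSpace H]
    (A : H →L[ℂ] H)
    (hA : ContinuousLinearMap.adjoint A * A = A * ContinuousLinearMap.adjoint A) :
    ‖A‖ ≤
      (1 / 2 : ℝ) *
        max ‖absOp A + absOp (CFC.sqrt (absOp (ContinuousLinearMap.adjoint A)) *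
              CFC.sqrt (absOp A))‖
          ‖absOp (ContinuousLinearMap.adjoint A) + absOp (CFC.sqrt (absOp A) *
              CFC.sqrt (absOp (ContinuousLinearMap.adjoint A)))‖ := by
  have : IsStarNormal A := ⟨hA⟩
  have h := CFC.norm_abs_add_abs_sqrt_abs_star_mul_sqrt_abs A
  have h' := CFC.norm_abs_add_abs_sqrt_abs_star_mul_sqrt_abs (star A)
  rw [star_star, norm_star] at h'
  simp only [absOp_eq_cfcAbs, ← ContinuousLinearMap.star_eq_adjoint, h, h', max_self]
  linarith
end

section
/- Let S, T be bounded linear operators on a complex Hilbert space H such that each of S and T is either accretive or dissipative. Then ω(ST) ≤ 3·ω(S)·ω(T). -/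
section

open ContinuousLinearMap RCLike
open Complex (I)

variable {H : Type*} [NormedAddCommGroup H] [InnerProductSpace ℂ H]

local notation "⟪" x ", " y "⟫" => inner ℂ x y

lemma norm_inner_apply_self_le_norm (S : H →L[ℂ] H) {x : H} (hx : ‖x‖ = 1) :
    ‖⟪S x, x⟫‖ ≤ ‖S‖ :=
  calc ‖⟪S x, x⟫‖ ≤ ‖S x‖ * ‖x‖ := norm_inner_le_norm _ _
    _ ≤ ‖S‖ := by rw [hx, mul_one]; exact S.unit_le_opNorm x hx.le

variable [CompleteSpace H]

lemma ContinuousLinearMap.IsPositive.norm_apply_sq_le {A : H →L[ℂ] H} (hA : A.IsPositive)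
    (x : H) : ‖A x‖ ^ 2 ≤ ‖A‖ * re ⟪A x, x⟫ := by
  have hA0 : 0 ≤ A := (nonneg_iff_isPositive A).2 hA
  set s := CFC.sqrt A
  have hs : star s = s := (CFC.sqrt_nonneg A).isSelfAdjoint.star_eq
  have hss : s * s = A := CFC.sqrt_mul_sqrt_self A
  -- conjugate `A ≤ ‖A‖` by `√A`
  have hle : A * A ≤ ‖A‖ • A := by
    have := CStarAlgebra.star_left_conjugate_le_norm_smul (a := s) (b := A)
    have hsAs : s * A * s = A * A := by rw [← hss]; simp only [mul_assoc]
    rwa [hs, hss, hsAs] at this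
  have h := ((le_def _ _).1 hle).re_inner_nonneg_left x
  rw [sub_apply, smul_apply, inner_sub_left, map_sub, mul_apply_eq_comp, ← adjoint_inner_right,
    hA.isSelfAdjoint.adjoint_eq, inner_self_eq_norm_sq] at h
  rwa [real_smul_eq_coe_smul (K := ℂ), inner_smul_left, conj_ofReal, re_ofReal_mul,
    sub_nonneg] at h

lemma numRadius_nonneg (S : H →L[ℂ] H) : 0 ≤ numRadius S :=
  Real.iSup_nonneg fun _ ↦ norm_nonneg _

lemma norm_inner_le_numRadius (S : H →L[ℂ] H) {x : H} (hx : ‖x‖ = 1) :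
    ‖⟪S x, x⟫‖ ≤ numRadius S :=
  le_ciSup (f := fun x : {x : H // ‖x‖ = 1} ↦ ‖⟪S x, (x : H)⟫‖)
    ⟨‖S‖, by rintro _ ⟨x, rfl⟩; exact norm_inner_apply_self_le_norm S x.2⟩ ⟨x, hx⟩

lemma numRadius_le_norm (S : H →L[ℂ] H) : numRadius S ≤ ‖S‖ :=
  Real.iSup_le (fun x ↦ norm_inner_apply_self_le_norm S x.2) (norm_nonneg S)

lemma numRadius_smul (c : ℂ) (S : H →L[ℂ] H) : numRadius (c • S) = ‖c‖ * numRadius S := by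
  simp only [numRadius, smul_apply, inner_smul_left, norm_mul, norm_conj]
  exact (Real.mul_iSup_of_nonneg (norm_nonneg c) _).symm

lemma isSelfAdjoint_reOp (S : H →L[ℂ] H) : IsSelfAdjoint (reOp S) := by
  simp [IsSelfAdjoint, reOp, ← star_eq_adjoint, star_smul, add_comm]

lemma re_inner_reOp_apply_self (S : H →L[ℂ] H) (x : H) : re ⟪reOp S x, x⟫ = re ⟪S x, x⟫ := by
  have h : Complex.re ⟪x, S x⟫ = Complex.re ⟪S x, x⟫ := inner_re_symm (𝕜 := ℂ) _ _
  simp [reOp, adjoint_inner_left, h, ← div_eq_mul_inv]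

lemma reOp_smul_neg_I (S : H →L[ℂ] H) : reOp ((-I) • S) = imOp S := by
  simp only [reOp, imOp, ← star_eq_adjoint, star_smul]
  rw [show star (-I) = I by simp, mul_inv, Complex.inv_I]
  module

lemma norm_reOp_le_numRadius (S : H →L[ℂ] H) : ‖reOp S‖ ≤ numRadius S := by
  rw [(reOp S).norm_eq_iSup_rayleighQuotient (isSelfAdjoint_reOp S).isSymmetric]
  refine ciSup_le fun x ↦ ?_
  rcases eq_or_ne x 0 with rfl | hx
  · simpa using numRadius_nonneg S
  have hc : ((‖x‖⁻¹ : ℝ) : ℂ) ≠ 0 := by simpa using hx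
  have hu : ‖((‖x‖⁻¹ : ℝ) : ℂ) • x‖ = 1 := by simp [norm_smul, hx]
  rw [← rayleigh_smul _ x hc, rayleighQuotient, hu, one_pow, div_one, reApplyInnerSelf_apply,
    re_inner_reOp_apply_self]
  exact (abs_re_le_norm _).trans (norm_inner_le_numRadius S hu)

lemma norm_imOp_le_numRadius (S : H →L[ℂ] H) : ‖imOp S‖ ≤ numRadius S := by
  have h := norm_reOp_le_numRadius ((-I) • S)
  rwa [reOp_smul_neg_I, numRadius_smul, norm_neg, Complex.norm_I, one_mul] at h

lemma norm_sq_add_norm_adjoint_apply_sq (S : H →L[ℂ] H) (x : H) :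
    ‖S x‖ ^ 2 + ‖adjoint S x‖ ^ 2 = 2 * (‖reOp S x‖ ^ 2 + ‖imOp S x‖ ^ 2) := by
  have hre : (2 : ℂ) • reOp S x = S x + adjoint S x := by
    rw [reOp, smul_apply, smul_smul, mul_inv_cancel₀ two_ne_zero, one_smul, add_apply]
  have him : (2 * I) • imOp S x = S x - adjoint S x := by
    rw [imOp, smul_apply, smul_smul, mul_inv_cancel₀ (by simp), one_smul, sub_apply]
  have h := parallelogram_law_with_norm ℂ (S x) (adjoint S x)
  rw [← hre, ← him, norm_smul, norm_smul] at h
  simp only [norm_ofNat, Complex.norm_mul, Complex.norm_I, mul_one] at h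
  linarith

lemma norm_apply_sq_le_of_accretive {S : H →L[ℂ] H} (hS : (reOp S).IsPositive) {x : H}
    (hx : ‖x‖ = 1) : ‖S x‖ ^ 2 ≤ 3 * numRadius S ^ 2 := by
  set ω := numRadius S
  set a := re ⟪S x, x⟫
  have ha : 0 ≤ a := by simpa only [re_inner_reOp_apply_self] using hS.re_inner_nonneg_left x
  have hre : ‖reOp S x‖ ^ 2 ≤ ω * a := by
    have h := hS.norm_apply_sq_le x
    rw [re_inner_reOp_apply_self] at h
    exact h.trans (mul_le_mul_of_nonneg_right (norm_reOp_le_numRadius S) ha)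
  have him : ‖imOp S x‖ ≤ ω := by
    simpa [hx] using (imOp S).le_of_opNorm_le (norm_imOp_le_numRadius S) x
  have hadj : a ≤ ‖adjoint S x‖ := by
    have h := re_inner_le_norm (𝕜 := ℂ) x (adjoint S x)
    rwa [adjoint_inner_right, hx, one_mul] at h
  have hpar := norm_sq_add_norm_adjoint_apply_sq S x
  nlinarith [sq_nonneg (ω - a), mul_self_le_mul_self ha hadj,
    mul_self_le_mul_self (norm_nonneg _) him]

lemma norm_le_sqrt_three_mul_numRadius_of_accretive {S : H →L[ℂ] H}
    (hS : (reOp S).IsPositive) : ‖S‖ ≤ √3 * numRadius S := by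
  have hω := numRadius_nonneg S
  refine opNorm_le_of_unit_norm (by positivity) fun x hx ↦ ?_
  refine (pow_le_pow_iff_left₀ (norm_nonneg _) (by positivity) two_ne_zero).1 ?_
  rw [mul_pow, Real.sq_sqrt zero_le_three]
  exact norm_apply_sq_le_of_accretive hS hx

lemma norm_le_sqrt_three_mul_numRadius {S : H →L[ℂ] H}
    (hS : (reOp S).IsPositive ∨ (imOp S).IsPositive) : ‖S‖ ≤ √3 * numRadius S := by
  rcases hS with hS | hS
  · exact norm_le_sqrt_three_mul_numRadius_of_accretive hS
  · rw [← reOp_smul_neg_I] at hS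
    have h := norm_le_sqrt_three_mul_numRadius_of_accretive hS
    rwa [numRadius_smul, norm_smul, norm_neg, Complex.norm_I, one_mul, one_mul] at h

end

theorem stmt_15 {H : Type*} [NormedAddCommGroup H] [InnerProductSpace ℂ H] [CompleteSpace H]
    (S T : H →L[ℂ] H) (hS : (reOp S).IsPositive ∨ (imOp S).IsPositive)
    (hT : (reOp T).IsPositive ∨ (imOp T).IsPositive) :
    numRadius (S * T) ≤ 3 * numRadius S * numRadius T := by
  calc numRadius (S * T) ≤ ‖S‖ * ‖T‖ := (numRadius_le_norm _).trans (norm_mul_le S T)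
    _ ≤ (√3 * numRadius S) * (√3 * numRadius T) :=
        mul_le_mul (norm_le_sqrt_three_mul_numRadius hS) (norm_le_sqrt_three_mul_numRadius hT)
          (norm_nonneg T) (mul_nonneg (Real.sqrt_nonneg 3) (numRadius_nonneg S))
    _ = 3 * numRadius S * numRadius T := by
        rw [mul_mul_mul_comm, Real.mul_self_sqrt zero_le_three, mul_assoc]
end

section
/- Let S be a bounded linear operator on a complex Hilbert space H such that Re S is a positive operator, or Im S is a positive operator. Then ‖S‖² ≤ (1/2)·‖S S* + S* S‖ + ‖Re S‖·‖Im S‖. -/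
section CStarAlgebra

variable {A : Type*} [CStarAlgebra A] [PartialOrder A] [StarOrderedRing A]

lemma norm_sub_algebraMap_half_norm_le_of_nonneg {p : A} (hp : 0 ≤ p) :
    ‖p - algebraMap ℝ A (‖p‖ / 2)‖ ≤ ‖p‖ / 2 := by
  have hcfc : p - algebraMap ℝ A (‖p‖ / 2) = cfc (fun x : ℝ ↦ x - ‖p‖ / 2) p := by
    rw [cfc_sub _ _, cfc_id' ℝ p, cfc_const _ p]
  rw [hcfc]
  refine norm_cfc_le (by positivity) fun x hx ↦ ?_
  have hx₀ : 0 ≤ x := spectrum_nonneg_of_nonneg hp hx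
  have hx₁ : x ≤ ‖p‖ := (le_algebraMap_iff_spectrum_le (a := p)).mp
    (IsSelfAdjoint.of_nonneg hp).le_algebraMap_norm_self x hx
  rw [Real.norm_eq_abs, abs_le]
  constructor <;> linarith

lemma norm_mul_sub_mul_le_of_nonneg {p : A} (hp : 0 ≤ p) (x : A) :
    ‖p * x - x * p‖ ≤ ‖p‖ * ‖x‖ := by
  set q := p - algebraMap ℝ A (‖p‖ / 2)
  have hq : ‖q‖ ≤ ‖p‖ / 2 := norm_sub_algebraMap_half_norm_le_of_nonneg hp
  have hshift : p * x - x * p = q * x - x * q := by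
    simp only [q, sub_mul, mul_sub, Algebra.commutes]
    abel
  calc ‖p * x - x * p‖ = ‖q * x - x * q‖ := by rw [hshift]
    _ ≤ ‖q‖ * ‖x‖ + ‖x‖ * ‖q‖ :=
        (norm_sub_le _ _).trans (add_le_add (norm_mul_le _ _) (norm_mul_le _ _))
    _ ≤ ‖p‖ / 2 * ‖x‖ + ‖x‖ * (‖p‖ / 2) := by gcongr
    _ = ‖p‖ * ‖x‖ := by ring

end CStarAlgebra

section ComplexAlgebra

variable {R : Type*} [Ring R] [Algebra ℂ R]

lemma sub_I_smul_mul_add_I_smul (a b : R) :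
    (a - Complex.I • b) * (a + Complex.I • b) =
      (a * a + b * b) + Complex.I • (a * b - b * a) := by
  simp only [mul_add, sub_mul, smul_mul_assoc, mul_smul_comm, smul_smul, Complex.I_mul_I,
    smul_sub, neg_smul, one_smul]
  abel

lemma add_I_smul_mul_sub_I_smul_add (a b : R) :
    (a + Complex.I • b) * (a - Complex.I • b) + (a - Complex.I • b) * (a + Complex.I • b) =
      (2 : ℂ) • (a * a + b * b) := by
  simp only [mul_add, add_mul, sub_mul, mul_sub, smul_mul_assoc, mul_smul_comm, smul_smul,
    Complex.I_mul_I, smul_sub, smul_add, neg_smul, one_smul, two_smul]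
  abel

end ComplexAlgebra

section Cartesian

open ContinuousLinearMap

variable {H : Type*} [NormedAddCommGroup H] [InnerProductSpace ℂ H] [CompleteSpace H]

lemma reOp_add_I_smul_imOp (S : H →L[ℂ] H) : reOp S + Complex.I • imOp S = S := by
  simp only [reOp, imOp, smul_smul]
  rw [show Complex.I * (2 * Complex.I)⁻¹ = 2⁻¹ by field_simp [Complex.I_ne_zero]]
  module

lemma reOp_sub_I_smul_imOp (S : H →L[ℂ] H) : reOp S - Complex.I • imOp S = adjoint S := by
  simp only [reOp, imOp, smul_smul]
  rw [show Complex.I * (2 * Complex.I)⁻¹ = 2⁻¹ by field_simp [Complex.I_ne_zero]]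
  module

lemma adjoint_mul_self_eq_reOp_imOp (S : H →L[ℂ] H) :
    adjoint S * S = (reOp S * reOp S + imOp S * imOp S) +
      Complex.I • (reOp S * imOp S - imOp S * reOp S) := by
  rw [← sub_I_smul_mul_add_I_smul, reOp_sub_I_smul_imOp, reOp_add_I_smul_imOp]

lemma mul_adjoint_add_adjoint_mul_eq_reOp_imOp (S : H →L[ℂ] H) :
    S * adjoint S + adjoint S * S = (2 : ℂ) • (reOp S * reOp S + imOp S * imOp S) := by
  rw [← add_I_smul_mul_sub_I_smul_add, reOp_sub_I_smul_imOp, reOp_add_I_smul_imOp]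

lemma norm_reOp_mul_imOp_sub_le {S : H →L[ℂ] H}
    (hS : (reOp S).IsPositive ∨ (imOp S).IsPositive) :
    ‖reOp S * imOp S - imOp S * reOp S‖ ≤ ‖reOp S‖ * ‖imOp S‖ := by
  rcases hS with hre | him
  · exact norm_mul_sub_mul_le_of_nonneg (nonneg_iff_isPositive _ |>.mpr hre) _
  · rw [norm_sub_rev, mul_comm]
    exact norm_mul_sub_mul_le_of_nonneg (nonneg_iff_isPositive _ |>.mpr him) _

end Cartesian

theorem stmt_16 {H : Type*} [NormedAddCommGroup H] [InnerProductSpace ℂ H] [CompleteSpace H]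
    (S : H →L[ℂ] H) (hS : (reOp S).IsPositive ∨ (imOp S).IsPositive) :
    ‖S‖ ^ 2 ≤
      (1 / 2 : ℝ) * ‖S * ContinuousLinearMap.adjoint S + ContinuousLinearMap.adjoint S * S‖ +
        ‖reOp S‖ * ‖imOp S‖ := by
  have hsum : (1 / 2 : ℝ) * ‖S * ContinuousLinearMap.adjoint S +
      ContinuousLinearMap.adjoint S * S‖ = ‖reOp S * reOp S + imOp S * imOp S‖ := by
    rw [mul_adjoint_add_adjoint_mul_eq_reOp_imOp, norm_smul, Complex.norm_ofNat]
    ring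
  calc ‖S‖ ^ 2 = ‖ContinuousLinearMap.adjoint S * S‖ := by
        rw [sq, ← ContinuousLinearMap.norm_adjoint_comp_self S]; rfl
    _ ≤ ‖reOp S * reOp S + imOp S * imOp S‖ + ‖reOp S * imOp S - imOp S * reOp S‖ := by
        rw [adjoint_mul_self_eq_reOp_imOp]
        refine (norm_add_le _ _).trans_eq ?_
        rw [norm_smul, Complex.norm_I, one_mul]
    _ ≤ _ := by rw [hsum]; gcongr; exact norm_reOp_mul_imOp_sub_le hS
end

section
/- Let S be a bounded linear operator on a complex Hilbert space H such that Re S is a positive operator, or Im S is a positive operator. Then, for the operator norm, ‖S S*‖ ≤ ‖(Re S)² + (Im S)²‖ + ‖Re S‖·‖Im S‖. -/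
/-!
Write `S = x + i y` with `x = Re S`, `y = Im S` self-adjoint. Then
`S S* = x² + y² + i (y x - x y)`, so it suffices to bound the commutator. If `a ≥ 0`, its
spectrum lies in `[0, ‖a‖]`, hence `c = a - ‖a‖/2` has norm at most `‖a‖/2`; since `a` and `c`
have the same commutator with any `b`, `‖a b - b a‖ ≤ 2 ‖c‖ ‖b‖ ≤ ‖a‖ ‖b‖`.
-/

open Complex ComplexStarModule

section StarModule

variable {A : Type*} [Ring A] [StarRing A] [Module ℂ A] [StarModule ℂ A]
  [IsScalarTower ℂ A A] [SMulCommClass ℂ A A]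

lemma mul_star_eq_realPart_sq_add_imaginaryPart_sq (a : A) :
    a * star a = (ℜ a : A) ^ 2 + (ℑ a : A) ^ 2 + I • ((ℑ a : A) * ℜ a - ℜ a * ℑ a) := by
  set x : A := ↑(ℜ a)
  set y : A := ↑(ℑ a)
  have hstar : star a = x - I • y := by
    conv_lhs => rw [← realPart_add_I_smul_imaginaryPart a]
    simp [x, y, sub_eq_add_neg]
  conv_lhs => rw [hstar, ← realPart_add_I_smul_imaginaryPart a]
  simp only [pow_two, add_mul, mul_sub, smul_mul_assoc, mul_smul_comm, smul_sub]
  match_scalars <;> simp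

end StarModule

section CStarAlgebra

variable {A : Type*} [CStarAlgebra A] [PartialOrder A] [StarOrderedRing A]

lemma norm_sub_algebraMap_half_norm_le {a : A} (ha : 0 ≤ a) :
    ‖a - algebraMap ℝ A (‖a‖ / 2)‖ ≤ ‖a‖ / 2 := by
  nontriviality A
  have hspec : ∀ x ∈ spectrum ℝ (a - algebraMap ℝ A (‖a‖ / 2)), |x| ≤ ‖a‖ / 2 := by
    rw [← spectrum.sub_singleton_eq]
    rintro _ ⟨x, hx, _, rfl, rfl⟩
    have h0 : 0 ≤ x := spectrum_nonneg_of_nonneg ha hx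
    have h1 : x ≤ ‖a‖ := (Real.le_norm_self x).trans (spectrum.norm_le_norm_of_mem hx)
    rw [abs_le]
    constructor <;> linarith
  have hsa : IsSelfAdjoint (a - algebraMap ℝ A (‖a‖ / 2)) :=
    (IsSelfAdjoint.of_nonneg ha).sub (.algebraMap A (.all _))
  rcases CStarAlgebra.norm_or_neg_norm_mem_spectrum hsa with h | h
  · simpa [abs_of_nonneg (norm_nonneg _)] using hspec _ h
  · simpa using hspec _ h

lemma norm_commutator_le_of_nonneg {a : A} (ha : 0 ≤ a) (b : A) :
    ‖a * b - b * a‖ ≤ ‖a‖ * ‖b‖ := by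
  set c := a - algebraMap ℝ A (‖a‖ / 2)
  have hc : a * b - b * a = c * b - b * c := by
    simp only [c, sub_mul, mul_sub, Algebra.commutes]
    abel
  calc ‖a * b - b * a‖ = ‖c * b - b * c‖ := by rw [hc]
    _ ≤ ‖c‖ * ‖b‖ + ‖b‖ * ‖c‖ :=
      (norm_sub_le _ _).trans (add_le_add (norm_mul_le _ _) (norm_mul_le _ _))
    _ = 2 * ‖c‖ * ‖b‖ := by ring
    _ ≤ ‖a‖ * ‖b‖ := by
      have := norm_sub_algebraMap_half_norm_le ha
      gcongr
      linarith

lemma norm_mul_star_le_of_nonneg_realPart_or_imaginaryPart {a : A} (ha : 0 ≤ (ℜ a : A) ∨ 0 ≤ (ℑ a : A)) :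
    ‖a * star a‖ ≤ ‖(ℜ a : A) ^ 2 + (ℑ a : A) ^ 2‖ + ‖(ℜ a : A)‖ * ‖(ℑ a : A)‖ := by
  have hcomm : ‖(ℑ a : A) * ℜ a - ℜ a * ℑ a‖ ≤ ‖(ℜ a : A)‖ * ‖(ℑ a : A)‖ := by
    rcases ha with hre | him
    · rw [← norm_neg, neg_sub]
      exact norm_commutator_le_of_nonneg hre _
    · rw [mul_comm]
      exact norm_commutator_le_of_nonneg him _
  calc ‖a * star a‖
      ≤ ‖(ℜ a : A) ^ 2 + (ℑ a : A) ^ 2‖ + ‖I • ((ℑ a : A) * ℜ a - ℜ a * ℑ a)‖ := by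
        rw [mul_star_eq_realPart_sq_add_imaginaryPart_sq]
        exact norm_add_le _ _
    _ ≤ ‖(ℜ a : A) ^ 2 + (ℑ a : A) ^ 2‖ + ‖(ℜ a : A)‖ * ‖(ℑ a : A)‖ := by
        rw [norm_smul, norm_I, one_mul]
        gcongr

end CStarAlgebra

section Operator

variable {H : Type*} [NormedAddCommGroup H] [InnerProductSpace ℂ H] [CompleteSpace H]

lemma reOp_eq_realPart (S : H →L[ℂ] H) : reOp S = ℜ S := by
  simp [reOp, realPart_apply_coe, ContinuousLinearMap.star_eq_adjoint, ← Complex.coe_smul]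

lemma imOp_eq_imaginaryPart (S : H →L[ℂ] H) : imOp S = ℑ S := by
  simp [imOp, imaginaryPart_apply_coe, ContinuousLinearMap.star_eq_adjoint, ← Complex.coe_smul,
    smul_smul]

end Operator

theorem stmt_19 {H : Type*} [NormedAddCommGroup H] [InnerProductSpace ℂ H] [CompleteSpace H]
    (S : H →L[ℂ] H) (hS : (reOp S).IsPositive ∨ (imOp S).IsPositive) :
    ‖S * ContinuousLinearMap.adjoint S‖ ≤
      ‖(reOp S) ^ 2 + (imOp S) ^ 2‖ + ‖reOp S‖ * ‖imOp S‖ := by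
  simp only [← ContinuousLinearMap.nonneg_iff_isPositive, reOp_eq_realPart,
    imOp_eq_imaginaryPart] at hS ⊢
  rw [← ContinuousLinearMap.star_eq_adjoint]
  exact norm_mul_star_le_of_nonneg_realPart_or_imaginaryPart hS
end
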